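/- arXiv:2106.00369 — 4 statements merged into one kernel-verified Lean document; each statement's English description precedes it below -/
import Mathlib

section
/- Let a ∈ ℂ, let I > 0 be real, and set T = |a|² + I. Then for all u ∈ ℂ and all real ρ > 0, (log ρ − ρ·(|u|²·T − 2·Re(u·a) + 1) + 1)/log 2 ≤ log₂(1 + |a|²/I). -/
/-!
Completing the square, `T · e(u) = |T u - ā|² + I`, shows that the MSE of any receiver is at
least the MMSE `I / T`. For a fixed MSE `e > 0` the surrogate `log ρ - ρ e + 1` is maximised at
`ρ = 1 / e`, where it equals `-log e`; and `-log (I / T) = log (1 + |a|² / I)` is the rate.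
-/

open Complex ComplexConjugate

noncomputable def mse (a : ℂ) (T : ℝ) (u : ℂ) : ℝ := ‖u‖ ^ 2 * T - 2 * (u * a).re + 1

lemma sq_norm_mul_sub_conj (a u : ℂ) (T : ℝ) :
    ‖(T : ℂ) * u - conj a‖ ^ 2 = T * (mse a T u - 1) + ‖a‖ ^ 2 := by
  simp only [mse, Complex.sq_norm, normSq_apply, sub_re, sub_im, mul_re, mul_im, ofReal_re,
    ofReal_im, conj_re, conj_im]
  ring

lemma one_sub_div_le_mse (a u : ℂ) {T : ℝ} (hT : 0 < T) : 1 - ‖a‖ ^ 2 / T ≤ mse a T u := by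
  have h : 0 ≤ T * (mse a T u - 1) + ‖a‖ ^ 2 :=
    sq_norm_mul_sub_conj a u T ▸ sq_nonneg _
  calc 1 - ‖a‖ ^ 2 / T = mse a T u - (T * (mse a T u - 1) + ‖a‖ ^ 2) / T := by
        field_simp; ring
    _ ≤ mse a T u := sub_le_self _ (div_nonneg h hT.le)

lemma log_sub_mul_add_one_le_neg_log {ρ e : ℝ} (hρ : 0 < ρ) (he : 0 < e) :
    Real.log ρ - ρ * e + 1 ≤ -Real.log e := by
  have h := Real.log_le_sub_one_of_pos (mul_pos hρ he)
  rw [Real.log_mul hρ.ne' he.ne'] at h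
  linarith

/-- Inequality half of the rate–WMMSE relationship: with `T = |a|² + I`,
`e(u) = |u|² T - 2 Re(u a) + 1` and MSE weight `ρ > 0`, the weighted-MSE
surrogate never exceeds the rate `log₂(1 + |a|²/I)`. -/
theorem rate_wmmse_upper_bound (a : ℂ) (I : ℝ) (hI : 0 < I) (T : ℝ)
    (hT : T = ‖a‖ ^ 2 + I) :
    ∀ u : ℂ, ∀ ρ : ℝ, 0 < ρ →
      (Real.log ρ - ρ * (‖u‖ ^ 2 * T - 2 * (u * a).re + 1) + 1) / Real.log 2 ≤
        Real.logb 2 (1 + ‖a‖ ^ 2 / I) := by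
  intro u ρ hρ
  have hT0 : 0 < T := by rw [hT]; positivity
  have hmmse : I / T ≤ mse a T u := by
    have h := one_sub_div_le_mse a u hT0
    rwa [one_sub_div hT0.ne', hT, add_sub_cancel_left, ← hT] at h
  have hrate : 1 + ‖a‖ ^ 2 / I = (I / T)⁻¹ := by
    rw [inv_div, hT]; field_simp; ring
  rw [Real.logb, hrate, Real.log_inv]
  gcongr
  calc Real.log ρ - ρ * mse a T u + 1 ≤ -Real.log (mse a T u) :=
        log_sub_mul_add_one_le_neg_log hρ ((div_pos hI hT0).trans_le hmmse)
    _ ≤ -Real.log (I / T) := by gcongr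
end

section
/- Let d, G be positive integers, h ∈ ℂ^d, vectors w_j^p ∈ ℂ^d for j in a finite index set 𝒢 of private precoders and w_l^c ∈ ℂ^d for l in a finite index set Ω of common precoders, σ > 0, and fix g ∈ 𝒢. Define the interference-plus-noise I = σ² + Σ_{j ∈ 𝒢, j ≠ g} |⟪h, w_j^p⟫|² + Σ_{l ∈ Ω} |⟪h, w_l^c⟫|², the private SINR γ = |⟪h, w_g^p⟫|² / I, the total power T = |⟪h, w_g^p⟫|² + I, and the MSE e(u) = |u|²·T − 2·Re(u·⟪h, w_g^p⟫) + 1 for u ∈ ℂ. Then log₂(1 + γ) = sup over u ∈ ℂ and real ρ > 0 of (log ρ − ρ·e(u) + 1)/log 2, and this supremum is attained. -/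
open scoped ComplexInnerProductSpace BigOperators

/-!
The inner maximisation over the weight is the Fenchel-type identity
`max_{ρ > 0} (log ρ - ρ a + 1) = -log a` (from `log x ≤ x - 1`, attained at `ρ = 1/a`), so the
double supremum equals `-log (min_u e u)`. Completing the square in `u`, the minimum MSE is
`1 - |⟪h, w_g⟫|² / T = I / T`, attained by the MMSE receiver `u = conj ⟪h, w_g⟫ / T`, and
`-log (I / T) = log (1 + γ)`.
-/

open Real

theorem Real.isGreatest_log_sub_mul_add_one {a : ℝ} (ha : 0 < a) :
    IsGreatest {y | ∃ ρ : ℝ, 0 < ρ ∧ y = log ρ - ρ * a + 1} (-log a) := by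
  refine ⟨⟨a⁻¹, inv_pos.2 ha, ?_⟩, ?_⟩
  · rw [log_inv, inv_mul_cancel₀ ha.ne']
    ring
  · rintro y ⟨ρ, hρ, rfl⟩
    have := log_le_sub_one_of_pos (mul_pos hρ ha)
    rw [log_mul hρ.ne' ha.ne'] at this
    linarith

theorem isGreatest_log_sub_mul_add_one_of_isLeast {α : Type*} {e : α → ℝ} {m : ℝ}
    (hm : IsLeast (Set.range e) m) (hm_pos : 0 < m) :
    IsGreatest {y | ∃ u : α, ∃ ρ : ℝ, 0 < ρ ∧ y = log ρ - ρ * e u + 1} (-log m) := by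
  obtain ⟨⟨u₀, rfl⟩, hle⟩ := hm
  refine ⟨?_, ?_⟩
  · obtain ⟨ρ, hρ, hy⟩ := (isGreatest_log_sub_mul_add_one hm_pos).1
    exact ⟨u₀, ρ, hρ, hy⟩
  · rintro y ⟨u, ρ, hρ, rfl⟩
    have he : e u₀ ≤ e u := hle ⟨u, rfl⟩
    calc log ρ - ρ * e u + 1 ≤ log ρ - ρ * e u₀ + 1 := by gcongr
      _ ≤ -log (e u₀) := (isGreatest_log_sub_mul_add_one hm_pos).2 ⟨ρ, hρ, rfl⟩

theorem Complex.isLeast_norm_sq_mul_sub_two_mul_re_add_one {T : ℝ} (hT : 0 < T) (c : ℂ) :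
    IsLeast (Set.range fun u : ℂ => ‖u‖ ^ 2 * T - 2 * (u * c).re + 1) (1 - ‖c‖ ^ 2 / T) := by
  refine ⟨⟨starRingEnd ℂ c / T, ?_⟩, ?_⟩
  · have hnorm : ‖starRingEnd ℂ c / T‖ = ‖c‖ / T := by
      rw [norm_div, RCLike.norm_conj, Complex.norm_real, norm_of_nonneg hT.le]
    have hre : (starRingEnd ℂ c / T * c).re = ‖c‖ ^ 2 / T := by
      rw [div_mul_eq_mul_div, mul_comm, Complex.mul_conj, Complex.normSq_eq_norm_sq,
        ← Complex.ofReal_div, Complex.ofReal_re]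
    simp only [hnorm, hre]
    field_simp
    ring
  · rintro _ ⟨u, rfl⟩
    have hre : (u * c).re ≤ ‖u‖ * ‖c‖ := (Complex.re_le_norm _).trans (norm_mul u c).le
    have hsquare : 2 * ‖u‖ * ‖c‖ - ‖u‖ ^ 2 * T ≤ ‖c‖ ^ 2 / T := by
      rw [le_div_iff₀ hT]
      nlinarith [sq_nonneg (T * ‖u‖ - ‖c‖)]
    dsimp only
    linarith

theorem rate_wmmse_private_general {d G : ℕ}
    {Ω : Type*} [Fintype Ω]
    (h : EuclideanSpace ℂ (Fin d))
    (wp : Fin G → EuclideanSpace ℂ (Fin d))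
    (wc : Ω → EuclideanSpace ℂ (Fin d))
    (σ : ℝ) (hσ : 0 < σ) (g : Fin G)
    (I : ℝ)
    (hI : I = σ ^ 2 + (∑ j ∈ Finset.univ.erase g, ‖⟪h, wp j⟫‖ ^ 2) +
      ∑ l : Ω, ‖⟪h, wc l⟫‖ ^ 2)
    (γ : ℝ) (hγ : γ = ‖⟪h, wp g⟫‖ ^ 2 / I)
    (T : ℝ) (hT : T = ‖⟪h, wp g⟫‖ ^ 2 + I)
    (e : ℂ → ℝ)
    (he : ∀ u : ℂ, e u = ‖u‖ ^ 2 * T - 2 * (u * ⟪h, wp g⟫).re + 1) :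
    IsGreatest
      {y : ℝ | ∃ u : ℂ, ∃ ρ : ℝ, 0 < ρ ∧
        y = (Real.log ρ - ρ * e u + 1) / Real.log 2}
      (Real.logb 2 (1 + γ)) := by
  have hI_pos : 0 < I := by
    rw [hI]
    positivity
  have hT_pos : 0 < T := by
    rw [hT]
    positivity
  have hmin : 1 - ‖⟪h, wp g⟫‖ ^ 2 / T = I / T := by
    rw [eq_div_iff hT_pos.ne', sub_mul, div_mul_cancel₀ _ hT_pos.ne', hT]
    ring
  have hleast : IsLeast (Set.range e) (I / T) := by
    rw [← hmin, show e = _ from funext he]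
    exact Complex.isLeast_norm_sq_mul_sub_two_mul_re_add_one hT_pos _
  have hrate : -log (I / T) = log (1 + γ) := by
    rw [← log_inv, inv_div, hT, hγ, add_div, div_self hI_pos.ne', add_comm]
  have hmono : Monotone fun y : ℝ => y / log 2 :=
    fun _ _ hxy => div_le_div_of_nonneg_right hxy (log_pos one_lt_two).le
  have hset : {y : ℝ | ∃ u : ℂ, ∃ ρ : ℝ, 0 < ρ ∧ y = (log ρ - ρ * e u + 1) / log 2} =
      (· / log 2) '' {y | ∃ u : ℂ, ∃ ρ : ℝ, 0 < ρ ∧ y = log ρ - ρ * e u + 1} := by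
    ext y
    simp [eq_comm]
  rw [hset, logb, ← hrate]
  exact hmono.map_isGreatest
    (isGreatest_log_sub_mul_add_one_of_isLeast hleast (div_pos hI_pos hT_pos))

/-- Rate–WMMSE lemma for the private stream of multicast group `g`: with
channel `h ∈ ℂ^d`, private precoders `wp j` (`j ∈ 𝒢`), non-decoded common
precoders `wc l` (`l ∈ Ω`), noise std `σ > 0`, interference-plus-noise
`I = σ² + ∑_{j ≠ g} |⟪h, wp j⟫|² + ∑_l |⟪h, wc l⟫|²`, SINR `γ = |⟪h, wp g⟫|²/I`,
total power `T`, and MSE `e(u) = |u|² T - 2 Re(u ⟪h, wp g⟫) + 1`, the rate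
`log₂(1+γ)` equals the (attained) supremum over `u ∈ ℂ`, `ρ > 0` of
`(log ρ - ρ e(u) + 1)/log 2`. -/
theorem rate_wmmse_private {d G : ℕ} (hd : 0 < d) (hG : 0 < G)
    {Ω : Type*} [Fintype Ω]
    (h : EuclideanSpace ℂ (Fin d))
    (wp : Fin G → EuclideanSpace ℂ (Fin d))
    (wc : Ω → EuclideanSpace ℂ (Fin d))
    (σ : ℝ) (hσ : 0 < σ) (g : Fin G)
    (I : ℝ)
    (hI : I = σ ^ 2 + (∑ j ∈ Finset.univ.erase g, ‖⟪h, wp j⟫‖ ^ 2) +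
      ∑ l : Ω, ‖⟪h, wc l⟫‖ ^ 2)
    (γ : ℝ) (hγ : γ = ‖⟪h, wp g⟫‖ ^ 2 / I)
    (T : ℝ) (hT : T = ‖⟪h, wp g⟫‖ ^ 2 + I)
    (e : ℂ → ℝ)
    (he : ∀ u : ℂ, e u = ‖u‖ ^ 2 * T - 2 * (u * ⟪h, wp g⟫).re + 1) :
    IsGreatest
      {y : ℝ | ∃ u : ℂ, ∃ ρ : ℝ, 0 < ρ ∧
        y = (Real.log ρ - ρ * e u + 1) / Real.log 2}
      (Real.logb 2 (1 + γ)) :=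
  rate_wmmse_private_general h wp wc σ hσ g I hI γ hγ T hT e he
end

section
/- Let d be a positive integer, h ∈ ℂ^d, vectors w_j^p ∈ ℂ^d for j in a finite index set 𝒢 of private precoders, and common precoders w_l^c ∈ ℂ^d indexed by the disjoint union of a finite set Ω (common streams never decoded), a finite set Ψ (common streams not yet decoded in the successive order), and a distinguished index i (the common stream currently decoded), and let σ > 0. Define I = σ² + Σ_{j ∈ 𝒢} |⟪h, w_j^p⟫|² + Σ_{l ∈ Ω} |⟪h, w_l^c⟫|² + Σ_{m ∈ Ψ} |⟪h, w_m^c⟫|², the common SINR γ = |⟪h, w_i^c⟫|² / I, T = |⟪h, w_i^c⟫|² + I, and e(u) = |u|²·T − 2·Re(u·⟪h, w_i^c⟫) + 1 for u ∈ ℂ. Then log₂(1 + γ) = sup over u ∈ ℂ and real ρ > 0 of (log ρ − ρ·e(u) + 1)/log 2, and this supremum is attained. -/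
open scoped ComplexInnerProductSpace ComplexConjugate

open Real

/-!
The two maximisations decouple. For fixed `x > 0` the concave function `ρ ↦ log ρ - ρ x + 1`
peaks at `ρ = x⁻¹` with value `-log x` (this is `log y ≤ y - 1`), so the supremum is
`-log (min_u e u)`. Completing the square, `e u = ‖T u - conj g‖² / T + I / T` with `g = ⟪h, wci⟫`,
so the MMSE receiver `u = conj g / T` gives `min e = I / T`, and `-log (I / T) = log (1 + γ)`.
-/

theorem isGreatest_log_sub_mul_add_one_div_log {α : Type*} {e : α → ℝ} {m b : ℝ} (hm : 0 < m)
    (hb : 1 < b) (he : IsLeast (Set.range e) m) :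
    IsGreatest {y : ℝ | ∃ u : α, ∃ ρ : ℝ, 0 < ρ ∧ y = (log ρ - ρ * e u + 1) / log b}
      (logb b m⁻¹) := by
  obtain ⟨⟨u₀, hu₀⟩, hle⟩ := he
  have hlogb : 0 < log b := log_pos hb
  constructor
  · refine ⟨u₀, m⁻¹, inv_pos.2 hm, ?_⟩
    rw [hu₀, inv_mul_cancel₀ hm.ne', logb]
    ring
  · rintro y ⟨u, ρ, hρ, rfl⟩
    have hmu : m ≤ e u := hle ⟨u, rfl⟩
    have heu : 0 < e u := hm.trans_le hmu
    have hρe : log (ρ * e u) ≤ ρ * e u - 1 := log_le_sub_one_of_pos (mul_pos hρ heu)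
    rw [log_mul hρ.ne' heu.ne'] at hρe
    have hlog_mono : log m ≤ log (e u) := log_le_log hm hmu
    rw [logb, log_inv, div_le_div_iff_of_pos_right hlogb]
    linarith

theorem mse_eq_norm_sq_div_add {T : ℝ} (hT : T ≠ 0) (u g : ℂ) :
    ‖u‖ ^ 2 * T - 2 * (u * g).re + 1 = ‖T * u - conj g‖ ^ 2 / T + (1 - ‖g‖ ^ 2 / T) := by
  simp only [Complex.sq_norm, Complex.normSq_apply, Complex.mul_re, Complex.mul_im,
    Complex.sub_re, Complex.sub_im, Complex.ofReal_re, Complex.ofReal_im, Complex.conj_re,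
    Complex.conj_im]
  field_simp
  ring

theorem isLeast_mse {T : ℝ} (hT : 0 < T) (g : ℂ) :
    IsLeast (Set.range fun u : ℂ => ‖u‖ ^ 2 * T - 2 * (u * g).re + 1) (1 - ‖g‖ ^ 2 / T) := by
  constructor
  · refine ⟨conj g / T, ?_⟩
    simp only [mse_eq_norm_sq_div_add hT.ne', mul_div_cancel₀ _ (Complex.ofReal_ne_zero.2 hT.ne'),
      sub_self, norm_zero]
    ring
  · rintro _ ⟨u, rfl⟩
    dsimp only
    rw [mse_eq_norm_sq_div_add hT.ne']
    have : 0 ≤ ‖T * u - conj g‖ ^ 2 / T := by positivity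
    linarith

theorem rate_wmmse_common_general {d : ℕ}
    {𝒢 Ω Ψ : Type*} [Fintype 𝒢] [Fintype Ω] [Fintype Ψ]
    (h : EuclideanSpace ℂ (Fin d))
    (wp : 𝒢 → EuclideanSpace ℂ (Fin d))
    (wcΩ : Ω → EuclideanSpace ℂ (Fin d))
    (wcΨ : Ψ → EuclideanSpace ℂ (Fin d))
    (wci : EuclideanSpace ℂ (Fin d))
    (σ : ℝ) (hσ : 0 < σ)
    (I : ℝ)
    (hI : I = σ ^ 2 + (∑ j : 𝒢, ‖⟪h, wp j⟫‖ ^ 2) +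
      (∑ l : Ω, ‖⟪h, wcΩ l⟫‖ ^ 2) + ∑ m : Ψ, ‖⟪h, wcΨ m⟫‖ ^ 2)
    (γ : ℝ) (hγ : γ = ‖⟪h, wci⟫‖ ^ 2 / I)
    (T : ℝ) (hT : T = ‖⟪h, wci⟫‖ ^ 2 + I)
    (e : ℂ → ℝ)
    (he : ∀ u : ℂ, e u = ‖u‖ ^ 2 * T - 2 * (u * ⟪h, wci⟫).re + 1) :
    IsGreatest
      {y : ℝ | ∃ u : ℂ, ∃ ρ : ℝ, 0 < ρ ∧
        y = (Real.log ρ - ρ * e u + 1) / Real.log 2}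
      (Real.logb 2 (1 + γ)) := by
  have hI_pos : 0 < I := hI ▸ by positivity
  have hT_pos : 0 < T := hT ▸ by positivity
  have hmin : 1 - ‖⟪h, wci⟫‖ ^ 2 / T = I / T := by
    rw [hT]; field_simp; ring
  have hrate : 1 + γ = (I / T)⁻¹ := by
    rw [hγ, hT, inv_div]; field_simp; ring
  obtain rfl : e = fun u => ‖u‖ ^ 2 * T - 2 * (u * ⟪h, wci⟫).re + 1 := funext he
  rw [hrate]
  exact isGreatest_log_sub_mul_add_one_div_log (div_pos hI_pos hT_pos) one_lt_two
    (hmin ▸ isLeast_mse hT_pos _)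

/-- Rate–WMMSE lemma for a common stream under SIC: the common precoders are
indexed by the disjoint union of `Ω` (never decoded), `Ψ` (not yet decoded) and
a distinguished index `i` (currently decoded, with precoder `wci`); with
interference-plus-noise
`I = σ² + ∑_{j ∈ 𝒢} |⟪h, wp j⟫|² + ∑_{l ∈ Ω} |⟪h, wcΩ l⟫|² + ∑_{m ∈ Ψ} |⟪h, wcΨ m⟫|²`,
SINR `γ = |⟪h, wci⟫|²/I`, total power `T = |⟪h, wci⟫|² + I`, and MSE
`e(u) = |u|² T - 2 Re(u ⟪h, wci⟫) + 1`, the rate `log₂(1+γ)` equals the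
(attained) supremum over `u ∈ ℂ`, `ρ > 0` of `(log ρ - ρ e(u) + 1)/log 2`. -/
theorem rate_wmmse_common {d : ℕ} (hd : 0 < d)
    {𝒢 Ω Ψ : Type*} [Fintype 𝒢] [Fintype Ω] [Fintype Ψ]
    (h : EuclideanSpace ℂ (Fin d))
    (wp : 𝒢 → EuclideanSpace ℂ (Fin d))
    (wcΩ : Ω → EuclideanSpace ℂ (Fin d))
    (wcΨ : Ψ → EuclideanSpace ℂ (Fin d))
    (wci : EuclideanSpace ℂ (Fin d))
    (σ : ℝ) (hσ : 0 < σ)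
    (I : ℝ)
    (hI : I = σ ^ 2 + (∑ j : 𝒢, ‖⟪h, wp j⟫‖ ^ 2) +
      (∑ l : Ω, ‖⟪h, wcΩ l⟫‖ ^ 2) + ∑ m : Ψ, ‖⟪h, wcΨ m⟫‖ ^ 2)
    (γ : ℝ) (hγ : γ = ‖⟪h, wci⟫‖ ^ 2 / I)
    (T : ℝ) (hT : T = ‖⟪h, wci⟫‖ ^ 2 + I)
    (e : ℂ → ℝ)
    (he : ∀ u : ℂ, e u = ‖u‖ ^ 2 * T - 2 * (u * ⟪h, wci⟫).re + 1) :
    IsGreatest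
      {y : ℝ | ∃ u : ℂ, ∃ ρ : ℝ, 0 < ρ ∧
        y = (Real.log ρ - ρ * e u + 1) / Real.log 2}
      (Real.logb 2 (1 + γ)) :=
  rate_wmmse_common_general h wp wcΩ wcΨ wci σ hσ I hI γ hγ T hT e he
end

section
/- Let (Ω, 𝓕, P) be a probability space and let h¹, h², … : Ω → ℂ^d be an i.i.d. sequence of random vectors with ‖hᵐ‖ ≤ C almost surely. Let W be a nonempty compact subset of (ℂ^d)^{G}, fix σ > 0 and g ∈ {1,…,G}, and define R(w, h) = log₂( 1 + |⟪h, w_g⟫|² / (σ² + Σ_{j ≠ g} |⟪h, w_j⟫|²) ) for w = (w₁,…,w_G) ∈ W. Then almost surely, sup_{w ∈ W} (1/M)·Σ_{m=1}^M R(w, hᵐ) converges to sup_{w ∈ W} E[R(w, h¹)] as M → ∞. -/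
/-!
The rate is jointly continuous in the precoders and the channel, hence uniformly continuous on
`W × closedBall 0 C`. A finite `1/(n+1)`-net of `W` therefore controls, uniformly over `W`,
both the sample averages and the expectations, and the ordinary strong law at the countably many
net points yields almost sure uniform convergence of the sample averages on `W`. Suprema of
uniformly close families are close, which gives convergence of the optimal values.
-/

open MeasureTheory ProbabilityTheory Filter
open Set Function
open scoped ComplexInnerProductSpace BigOperators Topology

/-- No boundedness is needed: if one family is unbounded above so is the other, and both suprema
are then the junk value `sSup ∅`. -/
theorem dist_ciSup_ciSup_le {ι : Type*} {f g : ι → ℝ} {ε : ℝ} (hε : 0 ≤ ε)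
    (h : ∀ i, dist (f i) (g i) ≤ ε) : dist (⨆ i, f i) (⨆ i, g i) ≤ ε := by
  have hfg : ∀ i, f i ≤ g i + ε ∧ g i ≤ f i + ε := fun i => by
    have := abs_le.1 ((Real.dist_eq _ _).symm.trans_le (h i))
    constructor <;> linarith [this.1, this.2]
  have bdd_of_bdd : ∀ {u v : ι → ℝ}, (∀ i, u i ≤ v i + ε) → BddAbove (range v) →
      BddAbove (range u) := fun huv ⟨b, hb⟩ =>
    ⟨b + ε, forall_mem_range.2 fun i => (huv i).trans (by linarith [hb (mem_range_self i)])⟩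
  rcases isEmpty_or_nonempty ι with hι | hι
  · simp [hε]
  by_cases hg : BddAbove (range g)
  · have hf := bdd_of_bdd (fun i => (hfg i).1) hg
    rw [Real.dist_eq, abs_sub_le_iff, sub_le_iff_le_add, sub_le_iff_le_add]
    exact ⟨ciSup_le fun i => by linarith [(hfg i).1, le_ciSup hg i],
      ciSup_le fun i => by linarith [(hfg i).2, le_ciSup hf i]⟩
  · have hf : ¬BddAbove (range f) := fun hf => hg (bdd_of_bdd (fun i => (hfg i).2) hf)
    rw [ciSup_of_not_bddAbove hf, ciSup_of_not_bddAbove hg, dist_self]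
    exact hε

theorem tendsto_ciSup_of_tendstoUniformly {ι κ : Type*} {l : Filter κ} {F : κ → ι → ℝ}
    {f : ι → ℝ} (h : TendstoUniformly F f l) :
    Tendsto (fun n => ⨆ i, F n i) l (𝓝 (⨆ i, f i)) :=
  Metric.tendsto_nhds.2 fun ε hε =>
    (Metric.tendstoUniformly_iff.1 h (ε / 2) (half_pos hε)).mono fun _ hn =>
      (dist_ciSup_ciSup_le (half_pos hε).le fun i => by
        rw [dist_comm]; exact (hn i).le).trans_lt (half_lt_self hε)

theorem tendstoUniformlyOn_of_finite_nets {ι α β : Type*} [PseudoMetricSpace β]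
    {l : Filter ι} {F : ι → α → β} {f : α → β} {W : Set α}
    (h : ∀ ε > 0, ∃ T : Set α, T.Finite ∧ (∀ t ∈ T, Tendsto (F · t) l (𝓝 (f t))) ∧
      ∀ w ∈ W, ∃ t ∈ T, (∀ n, dist (F n w) (F n t) ≤ ε) ∧ dist (f w) (f t) ≤ ε) :
    TendstoUniformlyOn F f l W := by
  refine Metric.tendstoUniformlyOn_iff.2 fun ε hε => ?_
  obtain ⟨T, hTfin, hTlim, hTnet⟩ := h (ε / 3) (by positivity)
  have hclose : ∀ᶠ n in l, ∀ t ∈ T, dist (f t) (F n t) < ε / 3 :=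
    (eventually_all_finite hTfin).2 fun t ht =>
      (Metric.tendsto_nhds.1 (hTlim t ht) (ε / 3) (by positivity)).mono fun _ hn => by
        rwa [dist_comm]
  filter_upwards [hclose] with n hn w hw
  obtain ⟨t, ht, hF, hf⟩ := hTnet w hw
  calc dist (f w) (F n w) ≤ dist (f w) (f t) + dist (f t) (F n t) + dist (F n t) (F n w) :=
        dist_triangle4 _ _ _ _
    _ < ε := by linarith [hf, hn t ht, hF n, dist_comm (F n t) (F n w)]

theorem IsCompact.exists_finite_net_of_continuousOn {α E : Type*} [PseudoMetricSpace α]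
    [PseudoMetricSpace E] {F : α → E → ℝ} {W : Set α} {K : Set E} (hW : IsCompact W)
    (hK : IsCompact K) (hF : ContinuousOn (uncurry F) (W ×ˢ K)) {ε : ℝ} (hε : 0 < ε) :
    ∃ T ⊆ W, T.Finite ∧ ∀ w ∈ W, ∃ t ∈ T, ∀ v ∈ K, dist (F w v) (F t v) < ε := by
  obtain ⟨δ, hδ, hδF⟩ :=
    Metric.uniformContinuousOn_iff.1 ((hW.prod hK).uniformContinuousOn_of_continuous hF) ε hε
  obtain ⟨T, hTW, hTfin, hTcov⟩ := hW.elim_finite_subcover_image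
    (fun w _ => Metric.isOpen_ball (x := w) (ε := δ))
    (fun w hw => mem_biUnion hw (Metric.mem_ball_self hδ))
  refine ⟨T, hTW, hTfin, fun w hw => ?_⟩
  obtain ⟨t, ht, hwt⟩ := mem_iUnion₂.1 (hTcov hw)
  refine ⟨t, ht, fun v hv => hδF (w, v) ⟨hw, hv⟩ (t, v) ⟨hTW ht, hv⟩ ?_⟩
  rw [Prod.dist_eq, dist_self]
  exact max_lt hwt hδ

theorem dist_mul_sum_range_le {x y : ℕ → ℝ} {ε : ℝ} (hε : 0 ≤ ε)
    (h : ∀ m, dist (x m) (y m) ≤ ε) (M : ℕ) :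
    dist (1 / (M : ℝ) * ∑ m ∈ Finset.range M, x m) (1 / (M : ℝ) * ∑ m ∈ Finset.range M, y m)
      ≤ ε := by
  rcases Nat.eq_zero_or_pos M with rfl | hM
  · simpa using hε
  rw [← smul_eq_mul, ← smul_eq_mul, dist_smul₀, Real.norm_of_nonneg (by positivity),
    one_div_mul_eq_div, div_le_iff₀ (by positivity)]
  calc _ ≤ ∑ m ∈ Finset.range M, dist (x m) (y m) := dist_sum_sum_le _ _ _
    _ ≤ ∑ _m ∈ Finset.range M, ε := Finset.sum_le_sum fun m _ => h m
    _ = ε * M := by simp [mul_comm]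

theorem dist_integral_le_of_ae_dist_le {Ω : Type*} [MeasurableSpace Ω] {P : Measure Ω}
    [IsProbabilityMeasure P] {f g : Ω → ℝ} (hf : Integrable f P) (hg : Integrable g P) {ε : ℝ}
    (h : ∀ᵐ ω ∂P, dist (f ω) (g ω) ≤ ε) : dist (∫ ω, f ω ∂P) (∫ ω, g ω ∂P) ≤ ε := by
  rw [dist_eq_norm, ← integral_sub hf hg]
  simpa using norm_integral_le_of_norm_le_const (f := fun ω => f ω - g ω)
    (h.mono fun ω hω => by rwa [← dist_eq_norm])

theorem Continuous.integrable_comp_of_ae_mem {Ω E : Type*} [MeasurableSpace Ω] {P : Measure Ω}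
    [IsFiniteMeasure P] [TopologicalSpace E] [MeasurableSpace E] [OpensMeasurableSpace E]
    {f : E → ℝ} (hf : Continuous f) {K : Set E} (hK : IsCompact K) {X : Ω → E}
    (hX : AEMeasurable X P) (hXK : ∀ᵐ ω ∂P, X ω ∈ K) : Integrable (fun ω => f (X ω)) P := by
  obtain ⟨B, hB⟩ := hK.exists_bound_of_continuousOn hf.continuousOn
  exact .of_bound (hf.measurable.comp_aemeasurable hX).aestronglyMeasurable B
    (hXK.mono fun ω hω => hB _ hω)

theorem ae_tendstoUniformlyOn_sampleMean {Ω α E : Type*} [MeasurableSpace Ω] {P : Measure Ω}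
    [IsProbabilityMeasure P] [PseudoMetricSpace α] [PseudoMetricSpace E] [MeasurableSpace E]
    [OpensMeasurableSpace E] {F : α → E → ℝ} (hF : Continuous (uncurry F)) {W : Set α}
    (hW : IsCompact W) {K : Set E} (hK : IsCompact K) {X : ℕ → Ω → E}
    (hindep : Pairwise fun i j => IndepFun (X i) (X j) P)
    (hident : ∀ m, IdentDistrib (X m) (X 0) P P) (hXK : ∀ m, ∀ᵐ ω ∂P, X m ω ∈ K) :
    ∀ᵐ ω ∂P, TendstoUniformlyOn
      (fun (M : ℕ) w => 1 / (M : ℝ) * ∑ m ∈ Finset.range M, F w (X m ω))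
      (fun w => ∫ ω', F w (X 0 ω') ∂P) atTop W := by
  have hFw (w : α) : Continuous (F w) := hF.uncurry_left w
  have hint (w : α) : Integrable (fun ω => F w (X 0 ω)) P :=
    (hFw w).integrable_comp_of_ae_mem hK (hident 0).aemeasurable_fst (hXK 0)
  have hslln (w : α) : ∀ᵐ ω ∂P, Tendsto (fun M : ℕ => 1 / (M : ℝ) * ∑ m ∈ Finset.range M,
      F w (X m ω)) atTop (𝓝 (∫ ω', F w (X 0 ω') ∂P)) := by
    simpa only [one_div, smul_eq_mul] using strong_law_ae (fun m ω => F w (X m ω)) (hint w)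
      (fun i j hij => (hindep hij).comp (hFw w).measurable (hFw w).measurable)
      (fun m => (hident m).comp (hFw w).measurable)
  choose T hTW hTfin hTnet using fun n : ℕ =>
    hW.exists_finite_net_of_continuousOn hK hF.continuousOn (Nat.one_div_pos_of_nat (n := n))
  have hgood : ∀ᵐ ω ∂P, (∀ m, X m ω ∈ K) ∧ ∀ n, ∀ t ∈ T n, Tendsto (fun M : ℕ =>
      1 / (M : ℝ) * ∑ m ∈ Finset.range M, F t (X m ω)) atTop (𝓝 (∫ ω', F t (X 0 ω') ∂P)) :=
    (ae_all_iff.2 hXK).and <| ae_all_iff.2 fun n =>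
      (ae_ball_iff (hTfin n).countable).2 fun t _ => hslln t
  filter_upwards [hgood] with ω ⟨hωK, hωlim⟩
  refine tendstoUniformlyOn_of_finite_nets fun ε hε => ?_
  obtain ⟨n, hn⟩ := exists_nat_one_div_lt hε
  refine ⟨T n, hTfin n, hωlim n, fun w hw => ?_⟩
  obtain ⟨t, ht, hwt⟩ := hTnet n w hw
  exact ⟨t, ht, dist_mul_sum_range_le hε.le fun m => (hwt _ (hωK m)).le.trans hn.le,
    dist_integral_le_of_ae_dist_le (hint w) (hint t) ((hXK 0).mono fun ω hω =>
      (hwt _ hω).le.trans hn.le)⟩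

noncomputable def sinrRate {ι E : Type*} [Fintype ι] [DecidableEq ι] [NormedAddCommGroup E]
    [InnerProductSpace ℂ E] (σ : ℝ) (g : ι) (w : ι → E) (v : E) : ℝ :=
  Real.logb 2 (1 + ‖⟪v, w g⟫‖ ^ 2 / (σ ^ 2 + ∑ j ∈ Finset.univ.erase g, ‖⟪v, w j⟫‖ ^ 2))

theorem continuous_sinrRate {ι E : Type*} [Fintype ι] [DecidableEq ι] [NormedAddCommGroup E]
    [InnerProductSpace ℂ E] {σ : ℝ} (hσ : σ ≠ 0) (g : ι) :
    Continuous (uncurry (sinrRate (E := E) σ g)) := by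
  have hden (p : (ι → E) × E) : 0 < σ ^ 2 + ∑ j ∈ Finset.univ.erase g, ‖⟪p.2, p.1 j⟫‖ ^ 2 := by
    positivity
  have harg (p : (ι → E) × E) :
      0 < 1 + ‖⟪p.2, p.1 g⟫‖ ^ 2 / (σ ^ 2 + ∑ j ∈ Finset.univ.erase g, ‖⟪p.2, p.1 j⟫‖ ^ 2) := by
    have := hden p
    positivity
  have hnum : Continuous fun p : (ι → E) × E => ‖⟪p.2, p.1 g⟫‖ ^ 2 := by fun_prop
  have hdenc : Continuous fun p : (ι → E) × E =>
      σ ^ 2 + ∑ j ∈ Finset.univ.erase g, ‖⟪p.2, p.1 j⟫‖ ^ 2 := by fun_prop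
  unfold sinrRate Real.logb
  exact ((continuous_const.add (hnum.div hdenc fun p => (hden p).ne')).log
    fun p => (harg p).ne').div_const _

theorem saa_optimal_value_convergence_general {Ωs : Type*} [MeasurableSpace Ωs]
    (P : Measure Ωs) [IsProbabilityMeasure P]
    {d G : ℕ}
    [MeasurableSpace (EuclideanSpace ℂ (Fin d))]
    [BorelSpace (EuclideanSpace ℂ (Fin d))]
    (h : ℕ → Ωs → EuclideanSpace ℂ (Fin d))
    (hindep : iIndepFun h P)
    (hident : ∀ m, IdentDistrib (h m) (h 0) P P)
    (C : ℝ) (hbdd : ∀ m, ∀ᵐ ω ∂P, ‖h m ω‖ ≤ C)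
    (W : Set (Fin G → EuclideanSpace ℂ (Fin d)))
    (hWc : IsCompact W)
    (σ : ℝ) (hσ : 0 < σ) (g : Fin G)
    (R : (Fin G → EuclideanSpace ℂ (Fin d)) → EuclideanSpace ℂ (Fin d) → ℝ)
    (hR : ∀ w v, R w v = Real.logb 2
      (1 + ‖⟪v, w g⟫‖ ^ 2 /
        (σ ^ 2 + ∑ j ∈ Finset.univ.erase g, ‖⟪v, w j⟫‖ ^ 2))) :
    ∀ᵐ ω ∂P, Tendsto
      (fun M : ℕ => ⨆ w : W,
        (1 / (M : ℝ)) * ∑ m ∈ Finset.range M, R w (h m ω))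
      atTop (nhds (⨆ w : W, ∫ ω', R w (h 0 ω') ∂P)) := by
  obtain rfl : R = sinrRate σ g := funext fun w => funext (hR w)
  have hunif := ae_tendstoUniformlyOn_sampleMean
    (continuous_sinrRate (E := EuclideanSpace ℂ (Fin d)) hσ.ne' g) hWc
    (isCompact_closedBall 0 C) (fun i j hij => hindep.indepFun hij) hident
    fun m => (hbdd m).mono fun ω hω => mem_closedBall_zero_iff.2 hω
  filter_upwards [hunif] with ω hω
  exact tendsto_ciSup_of_tendstoUniformly (tendstoUniformlyOn_iff_tendstoUniformly_comp_coe.1 hω)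

/-- Optimal-value convergence of the SAA problem (Theorem 1 of the paper): for
an i.i.d., almost surely bounded sequence of channel vectors, a nonempty
compact feasible set `W` of precoder tuples, noise std `σ > 0` and group index
`g`, the optimal value `sup_{w ∈ W}` of the sample-average rate converges
almost surely to the optimal value `sup_{w ∈ W}` of the ergodic rate. -/
theorem saa_optimal_value_convergence {Ωs : Type*} [MeasurableSpace Ωs]
    (P : Measure Ωs) [IsProbabilityMeasure P]
    {d G : ℕ} (hd : 0 < d) (hG : 0 < G)
    [MeasurableSpace (EuclideanSpace ℂ (Fin d))]
    [BorelSpace (EuclideanSpace ℂ (Fin d))]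
    (h : ℕ → Ωs → EuclideanSpace ℂ (Fin d))
    (hmeas : ∀ m, Measurable (h m))
    (hindep : iIndepFun h P)
    (hident : ∀ m, IdentDistrib (h m) (h 0) P P)
    (C : ℝ) (hC : 0 ≤ C) (hbdd : ∀ m, ∀ᵐ ω ∂P, ‖h m ω‖ ≤ C)
    (W : Set (Fin G → EuclideanSpace ℂ (Fin d)))
    (hWc : IsCompact W) (hWne : W.Nonempty)
    (σ : ℝ) (hσ : 0 < σ) (g : Fin G)
    (R : (Fin G → EuclideanSpace ℂ (Fin d)) → EuclideanSpace ℂ (Fin d) → ℝ)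
    (hR : ∀ w v, R w v = Real.logb 2
      (1 + ‖⟪v, w g⟫‖ ^ 2 /
        (σ ^ 2 + ∑ j ∈ Finset.univ.erase g, ‖⟪v, w j⟫‖ ^ 2))) :
    ∀ᵐ ω ∂P, Tendsto
      (fun M : ℕ => ⨆ w : W,
        (1 / (M : ℝ)) * ∑ m ∈ Finset.range M, R w (h m ω))
      atTop (nhds (⨆ w : W, ∫ ω', R w (h 0 ω') ∂P)) :=
  saa_optimal_value_convergence_general P h hindep hident C hbdd W hWc σ hσ g R hR
end
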